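/- arXiv:2505.08343 — 2 statements merged into one kernel-verified Lean document; each statement's English description precedes it below -/
import Mathlib

section
/- In a DAG, if every directed path from node i to the target Y passes through a node on which a hard intervention is performed (fixing it to its observed value equal to the factual value), then intervening on i cannot change the value of Y: the counterfactual Y under do(X_i = x_i*) together with do(X_S = x_S) equals the factual y, for any x_i*. -/
/-- If every directed path from node i₀ to the target Y passes through a node of S, and
a hard intervention fixes every node of S to its factual value, then additionally
intervening do(X_{i₀} = x*) cannot change Y: the counterfactual value of Y (computed
with the abducted noises z) equals its factual value, for any x*.
Nodes are indexed in a topological order (parents have smaller index); `xf` is the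
factual solution and `xcf` the solution after the joint intervention.  The blocking
condition says there is no directed path from i₀ to Y all of whose intermediate nodes
avoid S: a step a → b is an edge a ∈ PA b whose target b is either the final target Y
or lies outside S. -/
theorem blocked_paths_counterfactual_invariance {d : ℕ}
    (PA : Fin d → Finset (Fin d)) (hPA : ∀ i, ∀ j ∈ PA i, j < i)
    (f : Fin d → (Fin d → ℝ) → ℝ → ℝ)
    (hdep : ∀ i (x x' : Fin d → ℝ) (zi : ℝ),
      (∀ j ∈ PA i, x j = x' j) → f i x zi = f i x' zi)
    (z : Fin d → ℝ) (Y i₀ : Fin d) (S : Finset (Fin d))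
    (hi₀ : i₀ ∉ S) (xstar : ℝ)
    (hblock : ¬ Relation.ReflTransGen
      (fun a b => a ∈ PA b ∧ (b = Y ∨ b ∉ S)) i₀ Y)
    (xf : Fin d → ℝ) (hxf : ∀ i, xf i = f i xf (z i))
    (xcf : Fin d → ℝ)
    (hxcf : ∀ i, xcf i =
      if i = i₀ then xstar else if i ∈ S then xf i else f i xcf (z i)) :
    xcf Y = xf Y := by
  have key : ∀ n : ℕ, ∀ v : Fin d, v.val < n →
      ¬ Relation.ReflTransGen (fun a b => a ∈ PA b ∧ (b = Y ∨ b ∉ S)) i₀ v →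
      xcf v = xf v := by
    intro n
    induction n with
    | zero => intro v hv; omega
    | succ n ih' =>
      intro v hvn hv
      have ih : ∀ j : Fin d, j < v →
          ¬ Relation.ReflTransGen (fun a b => a ∈ PA b ∧ (b = Y ∨ b ∉ S)) i₀ j →
          xcf j = xf j := fun j hj => ih' j (by omega)
      have hvne : v ≠ i₀ := by
        rintro rfl; exact hv Relation.ReflTransGen.refl
      by_cases hS : v ∈ S
      · rw [hxcf v, if_neg hvne, if_pos hS]
      · rw [hxcf v, if_neg hvne, if_neg hS, hxf v]
        apply hdep
        intro j hj
        apply ih j (hPA v j hj)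
        intro hreach
        exact hv (hreach.tail ⟨hj, Or.inr hS⟩)
  exact key (Y.val+1) Y (by omega) hblock
end

section
/- A finite mixture of two univariate Gaussian densities with distinct parameter pairs is identifiable: if w·N(μ₁,σ₁²) + (1−w)·N(μ₂,σ₂²) = w'·N(μ₁',σ₁'²) + (1−w')·N(μ₂',σ₂'²) as functions on ℝ, with 0 < w, w' < 1 and (μ₁,σ₁²) ≠ (μ₂,σ₂²), then the component parameter-weight multisets coincide. -/
open Real

/-- The univariate Gaussian density N(μ, σ²). -/
noncomputable def gaussPDF (μ σ x : ℝ) : ℝ :=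
  (1 / (σ * Real.sqrt (2 * Real.pi))) * Real.exp (-(x - μ) ^ 2 / (2 * σ ^ 2))

open Filter

lemma quadBot (a b c : ℝ) (ha : a < 0) : Filter.Tendsto (fun x : ℝ => a*x^2 + b*x + c) atTop atBot := by
  have h1 : Filter.Tendsto (fun x : ℝ => x + b/(2*a)) atTop atTop :=
    tendsto_atTop_add_const_right _ _ tendsto_id
  have h2 : Filter.Tendsto (fun x : ℝ => (x + b/(2*a))^2) atTop atTop :=
    (tendsto_pow_atTop (two_ne_zero)).comp h1
  have h3 : Filter.Tendsto (fun x : ℝ => a * (x + b/(2*a))^2 + (c - b^2/(4*a))) atTop atBot := by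
    apply tendsto_atBot_add_const_right
    exact h2.const_mul_atTop_of_neg ha
  have : (fun x : ℝ => a * (x + b/(2*a))^2 + (c - b^2/(4*a))) = fun x : ℝ => a*x^2 + b*x + c := by
    have ha0 : a ≠ 0 := ne_of_lt ha
    funext x
    field_simp
    ring
  rwa [this] at h3

lemma linBot (b c : ℝ) (hb : b < 0) : Filter.Tendsto (fun x : ℝ => b*x + c) atTop atBot := by
  apply tendsto_atBot_add_const_right
  exact tendsto_id.const_mul_atTop_of_neg hb


noncomputable def gE (p : ℝ × ℝ) (x : ℝ) : ℝ := Real.exp (-(x - p.1)^2 / (2 * p.2^2))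

lemma ratio_tendsto (p q : ℝ × ℝ) (hp : 0 < p.2) (hq : 0 < q.2)
    (hlt : q.2 < p.2 ∨ (q.2 = p.2 ∧ q.1 < p.1)) :
    Filter.Tendsto (fun x => gE q x / gE p x) atTop (nhds 0) := by
  have hp0 : p.2 ≠ 0 := ne_of_gt hp
  have hq0 : q.2 ≠ 0 := ne_of_gt hq
  have key : (fun x => gE q x / gE p x) = fun x => Real.exp
      ((1/(2*p.2^2) - 1/(2*q.2^2))*x^2 + (q.1/q.2^2 - p.1/p.2^2)*x
        + (p.1^2/(2*p.2^2) - q.1^2/(2*q.2^2))) := by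
    funext x
    rw [gE, gE, ← Real.exp_sub]
    congr 1
    field_simp
    ring
  rw [key]
  have hexp : Filter.Tendsto (fun x : ℝ => (1/(2*p.2^2) - 1/(2*q.2^2))*x^2
      + (q.1/q.2^2 - p.1/p.2^2)*x + (p.1^2/(2*p.2^2) - q.1^2/(2*q.2^2))) atTop atBot := by
    rcases hlt with h | ⟨h2, h1⟩
    · apply quadBot
      have hq2 : (0:ℝ) < 2*q.2^2 := by positivity
      rw [sub_neg]
      exact one_div_lt_one_div_of_lt hq2 (by nlinarith)
    · have hA0 : 1/(2*p.2^2) - 1/(2*q.2^2) = 0 := by rw [h2]; ring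
      have heq2 : (fun x : ℝ => (1/(2*p.2^2) - 1/(2*q.2^2))*x^2
          + (q.1/q.2^2 - p.1/p.2^2)*x + (p.1^2/(2*p.2^2) - q.1^2/(2*q.2^2)))
          = fun x : ℝ => (q.1/q.2^2 - p.1/p.2^2)*x + (p.1^2/(2*p.2^2) - q.1^2/(2*q.2^2)) := by
        funext x; rw [hA0]; ring
      rw [heq2]
      apply linBot
      rw [h2, sub_neg, div_lt_div_iff₀ (by positivity) (by positivity)]
      nlinarith [mul_pos (sub_pos.2 h1) (pow_pos hp 2)]
  exact Real.tendsto_exp_atBot.comp hexp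

lemma expLI (s : Finset (ℝ × ℝ)) : ∀ (c : ℝ × ℝ → ℝ), (∀ p ∈ s, 0 < p.2) →
    (∀ x : ℝ, ∑ p ∈ s, c p * gE p x = 0) → ∀ p ∈ s, c p = 0 := by
  induction s using Finset.strongInduction with
  | _ s ih =>
    intro c hpos h p hp
    have hsne : s.Nonempty := ⟨p, hp⟩
    -- pick maximal element in lex order (snd, then fst)
    obtain ⟨m2, hm2mem, hm2max⟩ : ∃ m2 ∈ s.image Prod.snd, ∀ b ∈ s.image Prod.snd, b ≤ m2 :=
      ⟨(s.image Prod.snd).max' (hsne.image _), (s.image Prod.snd).max'_mem _,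
        fun b hb => Finset.le_max' _ b hb⟩
    set t := s.filter (fun q => q.2 = m2) with ht
    have htne : t.Nonempty := by
      obtain ⟨q, hq, hq2⟩ := Finset.mem_image.1 hm2mem
      exact ⟨q, Finset.mem_filter.2 ⟨hq, hq2⟩⟩
    obtain ⟨m1, hm1mem, hm1max⟩ : ∃ m1 ∈ t.image Prod.fst, ∀ b ∈ t.image Prod.fst, b ≤ m1 :=
      ⟨(t.image Prod.fst).max' (htne.image _), (t.image Prod.fst).max'_mem _,
        fun b hb => Finset.le_max' _ b hb⟩
    obtain ⟨p₀, hp₀t, hp₀1⟩ := Finset.mem_image.1 hm1mem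
    obtain ⟨hp₀s, hp₀2⟩ := Finset.mem_filter.1 hp₀t
    -- p₀ is the lex-max; every other element is strictly below
    have hmax : ∀ q ∈ s, q ≠ p₀ → q.2 < p₀.2 ∨ (q.2 = p₀.2 ∧ q.1 < p₀.1) := by
      intro q hq hne
      have h2 : q.2 ≤ m2 := hm2max _ (Finset.mem_image_of_mem _ hq)
      rcases lt_or_eq_of_le h2 with h2' | h2'
      · left; rw [hp₀2]; exact h2'
      · right
        have hqt : q ∈ t := Finset.mem_filter.2 ⟨hq, h2'⟩
        have h1 : q.1 ≤ m1 := hm1max _ (Finset.mem_image_of_mem _ hqt)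
        rcases lt_or_eq_of_le h1 with h1' | h1'
        · exact ⟨by rw [hp₀2, h2'], by rw [hp₀1]; exact h1'⟩
        · exact absurd (Prod.ext (by rw [h1', hp₀1]) (by rw [h2', hp₀2])) hne
    -- c p₀ = 0 via limit argument
    have hc0 : c p₀ = 0 := by
      have hgpos : ∀ x, 0 < gE p₀ x := fun x => Real.exp_pos _
      have hfun : ∀ x : ℝ, ∑ q ∈ s, c q * (gE q x / gE p₀ x) = 0 := by
        intro x
        have : ∑ q ∈ s, c q * (gE q x / gE p₀ x) = (∑ q ∈ s, c q * gE q x) / gE p₀ x := by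
          rw [Finset.sum_div]
          exact Finset.sum_congr rfl fun q _ => by ring
        rw [this, h x, zero_div]
      have hlim : Filter.Tendsto (fun x => ∑ q ∈ s, c q * (gE q x / gE p₀ x)) atTop
          (nhds (∑ q ∈ s, if q = p₀ then c p₀ else 0)) := by
        apply tendsto_finset_sum
        intro q hq
        by_cases hqe : q = p₀
        · subst hqe
          simp only [if_pos rfl]
          have : (fun x => c q * (gE q x / gE q x)) = fun _ => c q := by
            funext x; rw [div_self (ne_of_gt (hgpos x)), mul_one]
          rw [this]; exact tendsto_const_nhds
        · simp only [if_neg hqe]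
          have := (ratio_tendsto p₀ q (hpos p₀ hp₀s) (hpos q hq) (hmax q hq hqe)).const_mul (c q)
          simpa using this
      have : (∑ q ∈ s, if q = p₀ then c p₀ else 0) = 0 := by
        have h0 : Filter.Tendsto (fun x : ℝ => ∑ q ∈ s, c q * (gE q x / gE p₀ x)) atTop (nhds 0) := by
          simp only [hfun]; exact tendsto_const_nhds
        exact tendsto_nhds_unique hlim h0
      rwa [Finset.sum_ite_eq' s p₀ (fun _ => c p₀), if_pos hp₀s] at this
    -- now induct on s.erase p₀
    by_cases hpe : p = p₀
    · rw [hpe]; exact hc0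
    · apply ih (s.erase p₀) (Finset.erase_ssubset hp₀s) c
        (fun q hq => hpos q (Finset.mem_of_mem_erase hq))
        (fun x => ?_) p (Finset.mem_erase.2 ⟨hpe, hp⟩)
      have := Finset.add_sum_erase s (fun q => c q * gE q x) hp₀s
      rw [← h x, ← this]; simp [hc0]

/-- Identifiability of two-component Gaussian mixtures: if two mixtures of two
univariate Gaussians agree as functions on ℝ, with mixture weights in (0,1) and the
first mixture having distinct component parameter pairs, then the multisets of
(weight, mean, standard deviation) triples coincide. -/
theorem gaussian_mixture_identifiable
    (w w' μ₁ μ₂ μ₁' μ₂' σ₁ σ₂ σ₁' σ₂' : ℝ)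
    (hσ₁ : 0 < σ₁) (hσ₂ : 0 < σ₂) (hσ₁' : 0 < σ₁') (hσ₂' : 0 < σ₂')
    (hw : 0 < w ∧ w < 1) (hw' : 0 < w' ∧ w' < 1)
    (hdist : (μ₁, σ₁ ^ 2) ≠ (μ₂, σ₂ ^ 2))
    (heq : ∀ x : ℝ,
      w * gaussPDF μ₁ σ₁ x + (1 - w) * gaussPDF μ₂ σ₂ x
        = w' * gaussPDF μ₁' σ₁' x + (1 - w') * gaussPDF μ₂' σ₂' x) :
    ({(w, μ₁, σ₁), (1 - w, μ₂, σ₂)} : Multiset (ℝ × ℝ × ℝ))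
      = {(w', μ₁', σ₁'), (1 - w', μ₂', σ₂')} := by
  obtain ⟨hw0, hw1⟩ := hw
  obtain ⟨hw0', hw1'⟩ := hw'
  set k : ℝ → ℝ := fun σ => 1 / (σ * Real.sqrt (2 * Real.pi)) with hk
  have hsqrt : 0 < Real.sqrt (2 * Real.pi) := Real.sqrt_pos.2 (by positivity)
  have hkpos : ∀ σ : ℝ, 0 < σ → 0 < k σ := fun σ hσ => by
    rw [hk]; positivity
  have hne : ((μ₁, σ₁) : ℝ × ℝ) ≠ (μ₂, σ₂) := by
    intro h
    rw [Prod.mk.injEq] at h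
    exact hdist (by rw [Prod.mk.injEq]; exact ⟨h.1, by rw [h.2]⟩)
  set S : Finset (ℝ × ℝ) := {(μ₁,σ₁),(μ₂,σ₂),(μ₁',σ₁'),(μ₂',σ₂')} with hS
  set c : ℝ × ℝ → ℝ := fun p =>
      (if ((μ₁,σ₁) : ℝ × ℝ) = p then w * k σ₁ else 0)
    + (if ((μ₂,σ₂) : ℝ × ℝ) = p then (1-w) * k σ₂ else 0)
    - (if ((μ₁',σ₁') : ℝ × ℝ) = p then w' * k σ₁' else 0)
    - (if ((μ₂',σ₂') : ℝ × ℝ) = p then (1-w') * k σ₂' else 0) with hc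
  have hm1 : ((μ₁,σ₁) : ℝ × ℝ) ∈ S := by simp [hS]
  have hm2 : ((μ₂,σ₂) : ℝ × ℝ) ∈ S := by simp [hS]
  have hm1' : ((μ₁',σ₁') : ℝ × ℝ) ∈ S := by simp [hS]
  have hm2' : ((μ₂',σ₂') : ℝ × ℝ) ∈ S := by simp [hS]
  have hpos : ∀ p ∈ S, 0 < p.2 := by
    intro p hp
    simp only [hS, Finset.mem_insert, Finset.mem_singleton] at hp
    rcases hp with h|h|h|h <;> subst h <;> assumption
  have hsum : ∀ x : ℝ, ∑ p ∈ S, c p * gE p x = 0 := by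
    intro x
    have step : ∑ p ∈ S, c p * gE p x
        = ∑ p ∈ S, ((if ((μ₁,σ₁) : ℝ × ℝ) = p then w * k σ₁ * gE p x else 0)
          + (if ((μ₂,σ₂) : ℝ × ℝ) = p then (1-w) * k σ₂ * gE p x else 0)
          - (if ((μ₁',σ₁') : ℝ × ℝ) = p then w' * k σ₁' * gE p x else 0)
          - (if ((μ₂',σ₂') : ℝ × ℝ) = p then (1-w') * k σ₂' * gE p x else 0)) := by
      refine Finset.sum_congr rfl fun p _ => ?_
      rw [hc]
      simp only [sub_mul, add_mul, ite_mul, zero_mul]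
    rw [step, Finset.sum_sub_distrib, Finset.sum_sub_distrib, Finset.sum_add_distrib,
      Finset.sum_ite_eq, Finset.sum_ite_eq, Finset.sum_ite_eq, Finset.sum_ite_eq,
      if_pos hm1, if_pos hm2, if_pos hm1', if_pos hm2']
    have h := heq x
    simp only [gaussPDF] at h
    simp only [gE, hk]
    linear_combination h
  have hzero := expLI S c hpos hsum
  have hc1 := hzero _ hm1
  have hc2 := hzero _ hm2
  rw [hc] at hc1 hc2
  simp only [eq_self_iff_true, if_true, if_neg hne, if_neg (Ne.symm hne)] at hc1 hc2
  -- hc1 : w * k σ₁ + 0 - if... ; clean up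
  by_cases b1 : ((μ₁',σ₁') : ℝ × ℝ) = (μ₁,σ₁) <;>
    by_cases b2 : ((μ₂',σ₂') : ℝ × ℝ) = (μ₁,σ₁)
  · -- both primes = q1 : contradiction via hc2
    have e1 : ((μ₁',σ₁') : ℝ × ℝ) ≠ (μ₂,σ₂) := by rw [b1]; exact hne
    have e2 : ((μ₂',σ₂') : ℝ × ℝ) ≠ (μ₂,σ₂) := by rw [b2]; exact hne
    rw [if_neg e1, if_neg e2] at hc2
    have hk2 := hkpos σ₂ hσ₂
    have : (0:ℝ) < (1 - w) * k σ₂ := mul_pos (by linarith) hk2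
    linarith
  · -- b1 true, b2 false
    have e1 : ((μ₁',σ₁') : ℝ × ℝ) ≠ (μ₂,σ₂) := by rw [b1]; exact hne
    rw [if_neg e1] at hc2
    by_cases b2' : ((μ₂',σ₂') : ℝ × ℝ) = (μ₂,σ₂)
    · rw [if_pos b2'] at hc2
      rw [if_pos b1, if_neg b2] at hc1
      obtain ⟨e11, e12⟩ := Prod.mk.injEq .. ▸ b1
      obtain ⟨e21, e22⟩ := Prod.mk.injEq .. ▸ b2'
      have hww : w = w' := by
        rw [e12] at hc1
        have := hkpos σ₁ hσ₁
        have h' : (w - w') * k σ₁ = 0 := by linear_combination hc1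
        rcases mul_eq_zero.1 h' with h'' | h''
        · linarith
        · exact absurd h'' (ne_of_gt this)
      rw [e11, e12, e21, e22, hww]
    · rw [if_neg b2'] at hc2
      have hk2 := hkpos σ₂ hσ₂
      have : (0:ℝ) < (1 - w) * k σ₂ := mul_pos (by linarith) hk2
      linarith
  · -- b1 false, b2 true : swap case
    have e2 : ((μ₂',σ₂') : ℝ × ℝ) ≠ (μ₂,σ₂) := by rw [b2]; exact hne
    rw [if_neg e2] at hc2
    rw [if_neg b1, if_pos b2] at hc1
    by_cases b1' : ((μ₁',σ₁') : ℝ × ℝ) = (μ₂,σ₂)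
    · rw [if_pos b1'] at hc2
      obtain ⟨e11, e12⟩ := Prod.mk.injEq .. ▸ b1'
      obtain ⟨e21, e22⟩ := Prod.mk.injEq .. ▸ b2
      have k1 := hkpos σ₁ hσ₁
      have k2 := hkpos σ₂ hσ₂
      have hww : w = 1 - w' := by
        rw [e22] at hc1
        have h' : (w - (1 - w')) * k σ₁ = 0 := by linear_combination hc1
        rcases mul_eq_zero.1 h' with h'' | h''
        · linarith
        · exact absurd h'' (ne_of_gt k1)
      have hww2 : 1 - w = w' := by
        rw [e12] at hc2
        have h' : ((1 - w) - w') * k σ₂ = 0 := by linear_combination hc2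
        rcases mul_eq_zero.1 h' with h'' | h''
        · linarith
        · exact absurd h'' (ne_of_gt k2)
      rw [e11, e12, e21, e22, ← hww, ← hww2]
      exact Multiset.pair_comm _ _
    · rw [if_neg b1'] at hc2
      have hk2 := hkpos σ₂ hσ₂
      have : (0:ℝ) < (1 - w) * k σ₂ := mul_pos (by linarith) hk2
      linarith
  · -- neither prime = q1 : contradiction via hc1
    rw [if_neg b1, if_neg b2] at hc1
    have hk1 := hkpos σ₁ hσ₁
    have : (0:ℝ) < w * k σ₁ := mul_pos hw0 hk1
    linarith
end
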